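/- arXiv:1211.4194 — 2 statements merged into one kernel-verified Lean document; each statement's English description precedes it below -/
import Mathlib

section
/- Let k_{12} be a positive integer and let k_{13} and k_{23} be positive integers not divisible by 2 or by 3. Then the Coxeter group W = ⟨s_1,s_2,s_3 | s_i^2 = (s_1 s_2)^{3k_{12}} = (s_1 s_3)^{5k_{13}} = (s_2 s_3)^{5k_{23}} = 1⟩ contains a subgroup of index 18·k_{12} generated by reflections; in particular W has a proper finite-index reflection subgroup. -/
/-!
Let `m = 3k₁₂` and let `W` act on the `6m` cells `aⱼ, bⱼ, cⱼ` (`j ∈ ℤ/2m`): `s₀, s₁` walk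
around the cycle of `a`-cells (`s₀` joins `a₂ᵢ, a₂ᵢ₊₁`, `s₁` joins `a₂ᵢ₋₁, a₂ᵢ`), `s₂` swaps `aⱼ`
and `bⱼ`, and for even `j` the cell `bⱼ` is swapped with `cⱼ` by `s₀` and with `cⱼ₊₁` by `s₁`.
On each block `{aⱼ, aⱼ₊₁, bⱼ, bⱼ₊₁, cⱼ, cⱼ₊₁}` (`j` even) both `s₀s₂` and `s₁s₂` are a 5-cycle and a
fixed point, while `s₀s₁` rotates the `a`-cells by two and has order 3 on the other cells, so
these involutions satisfy the Coxeter relations.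

The stabilizer of `a₀` then has index `6m = 18k₁₂`, and it is generated by reflections: choosing
words `g x` with `g x • a₀ = x` such that `g (sᵢ x) = sᵢ g x` whenever `sᵢ x ≠ x`, induction on
word length writes every `w` as `g (w • a₀) · h`, where `h` is a product of the reflections
`(g x)⁻¹ sᵢ g x` with `sᵢ x = x`, each of which fixes `a₀`.
-/

open MulAction

namespace CoxeterSystem

variable {B W X : Type*} [Group W] [MulAction W X] {M : CoxeterMatrix B} (cs : CoxeterSystem M W)

theorem wordProd_alternatingWord_add_two_mul_mul (i i' : B) (n q : ℕ) :
    cs.wordProd (alternatingWord i i' (n + 2 * M i i' * q)) =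
      cs.wordProd (alternatingWord i i' n) := by
  simp [prod_alternatingWord_eq_mul_pow, Nat.even_add, mul_assoc, Nat.add_mul_div_left, pow_add,
    pow_mul, simple_mul_simple_pow]

theorem wordProd_alternatingWord_mod (i i' : B) (n : ℕ) :
    cs.wordProd (alternatingWord i i' (n % (2 * M i i'))) =
      cs.wordProd (alternatingWord i i' n) := by
  rw [← wordProd_alternatingWord_add_two_mul_mul cs i i' _ (n / (2 * M i i')), Nat.mod_add_div]

theorem _root_.CoxeterMatrix.isLiftable_of_lt [LinearOrder B] {G : Type*} [Group G] (f : B → G)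
    (hsq : ∀ i, f i * f i = 1) (hlt : ∀ i i', i < i' → (f i * f i') ^ M i i' = 1) :
    M.IsLiftable f := by
  intro i i'
  rcases lt_trichotomy i i' with h | rfl | h
  · exact hlt i i' h
  · rw [M.diagonal, pow_one, hsq]
  · rw [M.symmetric, ← inv_inj, ← inv_pow, mul_inv_rev, inv_eq_of_mul_eq_one_right (hsq i),
      inv_eq_of_mul_eq_one_right (hsq i'), hlt i' i h, inv_one]

theorem stabilizer_eq_closure_isReflection {x₀ : X} (g : X → W) (hg : ∀ x, g x • x₀ = x)
    (hg₀ : g x₀ = 1)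
    (hstep : ∀ x i, cs.simple i • x ≠ x → g (cs.simple i • x) = cs.simple i * g x) :
    stabilizer W x₀ = Subgroup.closure {t | cs.IsReflection t ∧ t • x₀ = x₀} := by
  set H := Subgroup.closure {t | cs.IsReflection t ∧ t • x₀ = x₀}
  refine le_antisymm (fun w hw => ?_) ((Subgroup.closure_le _).2 fun t ht => ht.2)
  have key : ∀ w : W, (g (w • x₀))⁻¹ * w ∈ H := by
    intro w
    obtain ⟨ω, rfl⟩ := cs.wordProd_surjective w
    induction ω with
    | nil => simp [hg₀]
    | cons i ω ih =>
      set x := cs.wordProd ω • x₀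
      rw [wordProd_cons, mul_smul]
      by_cases hfix : cs.simple i • x = x
      · have hrefl : (g x)⁻¹ * cs.simple i * g x ∈ H := by
          refine Subgroup.subset_closure ⟨⟨(g x)⁻¹, i, by simp⟩, ?_⟩
          rw [mul_smul, mul_smul, hg, hfix, inv_smul_eq_iff, hg]
        rw [hfix]
        simpa [mul_assoc] using H.mul_mem hrefl ih
      · rw [hstep x i hfix, mul_inv_rev, mul_assoc, cs.inv_simple, cs.simple_mul_simple_cancel_left]
        exact ih
  simpa [mem_stabilizer_iff.1 hw, hg₀] using key w

theorem index_closure_isReflection {x₀ : X} (g : X → W) (hg : ∀ x, g x • x₀ = x) (hg₀ : g x₀ = 1)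
    (hstep : ∀ x i, cs.simple i • x ≠ x → g (cs.simple i • x) = cs.simple i * g x) :
    (Subgroup.closure {t | cs.IsReflection t ∧ t • x₀ = x₀}).index = Nat.card X := by
  have : IsPretransitive W X :=
    ⟨fun x y => ⟨g y * (g x)⁻¹, by rw [mul_smul, inv_smul_eq_iff.2 (hg x).symm, hg]⟩⟩
  rw [← cs.stabilizer_eq_closure_isReflection g hg hg₀ hstep, index_stabilizer_of_transitive]

end CoxeterSystem

namespace CellAction

variable {m : ℕ}

/-- `.inl j`, `.inr (.inl j)`, `.inr (.inr j)` are the cells `aⱼ`, `bⱼ`, `cⱼ`. -/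
abbrev Cell (m : ℕ) := ZMod (2 * m) ⊕ ZMod (2 * m) ⊕ ZMod (2 * m)

def par : ZMod (2 * m) →+* ZMod 2 := ZMod.castHom (dvd_mul_right 2 m) (ZMod 2)

@[simp] lemma par_sub_one (j : ZMod (2 * m)) : par (j - 1) = par j + 1 := by
  rw [map_sub, map_one, CharTwo.sub_eq_add]

lemma par_cases (j : ZMod (2 * m)) : par j = 0 ∨ par j = 1 := by
  generalize par j = e; revert e; decide

def τ0 : Cell m → Cell m
  | .inl j => .inl (if par j = 0 then j + 1 else j - 1)
  | .inr (.inl j) => if par j = 0 then .inr (.inr j) else .inr (.inl j)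
  | .inr (.inr j) => if par j = 0 then .inr (.inl j) else .inr (.inr j)

def τ1 : Cell m → Cell m
  | .inl j => .inl (if par j = 0 then j - 1 else j + 1)
  | .inr (.inl j) => if par j = 0 then .inr (.inr (j + 1)) else .inr (.inl j)
  | .inr (.inr j) => if par j = 0 then .inr (.inr j) else .inr (.inl (j - 1))

def τ2 : Cell m → Cell m
  | .inl j => .inr (.inl j)
  | .inr (.inl j) => .inl j
  | .inr (.inr j) => .inr (.inr j)

lemma τ0_involutive : Function.Involutive (τ0 (m := m)) := by
  rintro (j | j | j) <;> rcases par_cases j with h | h <;> simp [τ0, h, CharTwo.add_self_eq_zero]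

lemma τ1_involutive : Function.Involutive (τ1 (m := m)) := by
  rintro (j | j | j) <;> rcases par_cases j with h | h <;> simp [τ1, h, CharTwo.add_self_eq_zero]

lemma τ2_involutive : Function.Involutive (τ2 (m := m)) := by
  rintro (j | j | j) <;> rfl

def σ : Fin 3 → Equiv.Perm (Cell m) :=
  ![τ0_involutive.toPerm, τ1_involutive.toPerm, τ2_involutive.toPerm]

lemma σ_mul_self (i : Fin 3) : σ (m := m) i * σ i = 1 := by
  ext x
  fin_cases i
  · exact τ0_involutive x
  · exact τ1_involutive x
  · exact τ2_involutive x

@[simp] lemma σ0_apply (x : Cell m) : σ 0 x = τ0 x := rfl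
@[simp] lemma σ1_apply (x : Cell m) : σ 1 x = τ1 x := rfl
@[simp] lemma σ2_apply (x : Cell m) : σ 2 x = τ2 x := rfl

lemma σ0_mul_σ2_pow_five : (σ (m := m) 0 * σ 2) ^ 5 = 1 := by
  ext (j | j | j) <;> rcases par_cases j with h | h <;>
    simp [pow_succ, τ0, τ2, h, CharTwo.add_self_eq_zero]

lemma σ1_mul_σ2_pow_five : (σ (m := m) 1 * σ 2) ^ 5 = 1 := by
  ext (j | j | j) <;> rcases par_cases j with h | h <;>
    simp [pow_succ, τ1, τ2, h, CharTwo.add_self_eq_zero]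

lemma σ0_mul_σ1_pow_apply_inl (k : ℕ) (j : ZMod (2 * m)) :
    ((σ 0 * σ 1 : Equiv.Perm (Cell m)) ^ k) (.inl j) =
      .inl (if par j = 0 then j - 2 * k else j + 2 * k) := by
  induction k generalizing j with
  | zero => simp
  | succ k ih =>
    rcases par_cases j with h | h <;>
      simp [pow_succ, τ0, τ1, h, ih, CharTwo.add_self_eq_zero] <;> ring

lemma σ0_mul_σ1_pow_three_apply_inr (y : ZMod (2 * m) ⊕ ZMod (2 * m)) :
    ((σ 0 * σ 1 : Equiv.Perm (Cell m)) ^ 3) (.inr y) = .inr y := by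
  rcases y with j | j <;> rcases par_cases j with h | h <;>
    simp [pow_succ, τ0, τ1, h, CharTwo.add_self_eq_zero]

lemma σ0_mul_σ1_pow (h3 : 3 ∣ m) : (σ (m := m) 0 * σ 1) ^ m = 1 := by
  ext (j | y)
  · have h2m : (2 * m : ZMod (2 * m)) = 0 := by exact_mod_cast ZMod.natCast_self (2 * m)
    simp [σ0_mul_σ1_pow_apply_inl, h2m]
  · obtain ⟨k, rfl⟩ := h3
    rw [pow_mul]
    exact Equiv.Perm.pow_apply_eq_self_of_apply_eq_self (σ0_mul_σ1_pow_three_apply_inr y) k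

section Coxeter

variable {W : Type*} [Group W] {M : CoxeterMatrix (Fin 3)} (cs : CoxeterSystem M W)

lemma isLiftable_σ (h01 : M 0 1 = m) (h3 : 3 ∣ m) (h02 : 5 ∣ M 0 2) (h12 : 5 ∣ M 1 2) :
    M.IsLiftable (σ (m := m)) := by
  refine M.isLiftable_of_lt _ σ_mul_self fun i i' h => ?_
  fin_cases i <;> fin_cases i' <;> simp at h
  · simpa [h01] using σ0_mul_σ1_pow h3
  · obtain ⟨k, hk⟩ := h02
    simp [hk, pow_mul, σ0_mul_σ2_pow_five]
  · obtain ⟨k, hk⟩ := h12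
    simp [hk, pow_mul, σ1_mul_σ2_pow_five]

/-- The product `⋯ s₀ s₁ s₀` of `j.val` letters, which moves `a₀` to `aⱼ`. -/
def alternatingProd (j : ZMod (2 * m)) : W := cs.wordProd (CoxeterSystem.alternatingWord 1 0 j.val)

variable {cs}

lemma alternatingProd_natCast (h01 : M 0 1 = m) (k : ℕ) :
    alternatingProd cs (k : ZMod (2 * m)) = cs.wordProd (CoxeterSystem.alternatingWord 1 0 k) := by
  have h := cs.wordProd_alternatingWord_mod 1 0 k
  rwa [M.symmetric, h01, ← ZMod.val_natCast] at h

variable (cs) in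
def transversal : Cell m → W
  | .inl j => alternatingProd cs j
  | .inr (.inl j) => cs.simple 2 * alternatingProd cs j
  | .inr (.inr j) =>
    if par j = 0 then cs.simple 0 * cs.simple 2 * alternatingProd cs j
    else cs.simple 1 * cs.simple 2 * alternatingProd cs (j - 1)

lemma transversal_inl_zero : transversal cs (.inl (0 : ZMod (2 * m))) = 1 := by
  simp [transversal, alternatingProd, CoxeterSystem.alternatingWord]

variable [NeZero m]

lemma alternatingProd_add_one (h01 : M 0 1 = m) (j : ZMod (2 * m)) :
    alternatingProd cs (j + 1) = cs.simple (if par j = 0 then 0 else 1) * alternatingProd cs j := by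
  obtain ⟨k, rfl⟩ := ZMod.natCast_zmod_surjective j
  rw [← Nat.cast_succ, alternatingProd_natCast h01, alternatingProd_natCast h01, map_natCast,
    CoxeterSystem.alternatingWord_succ', cs.wordProd_cons]
  simp_rw [ZMod.natCast_eq_zero_iff_even]

lemma alternatingProd_sub_one (h01 : M 0 1 = m) (j : ZMod (2 * m)) :
    alternatingProd cs (j - 1) = cs.simple (if par j = 0 then 1 else 0) * alternatingProd cs j := by
  have h := alternatingProd_add_one (cs := cs) h01 (j - 1)
  rw [sub_add_cancel, par_sub_one] at h
  rw [h, ← mul_assoc]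
  rcases par_cases j with hj | hj <;>
    simp [hj, CharTwo.add_self_eq_zero, cs.simple_mul_simple_self]

variable [MulAction W (Cell m)] (hact : ∀ i (x : Cell m), cs.simple i • x = σ i x)
include hact

lemma alternatingProd_smul_inl_zero (h01 : M 0 1 = m) (j : ZMod (2 * m)) :
    alternatingProd cs j • (.inl 0 : Cell m) = .inl j := by
  obtain ⟨k, rfl⟩ := ZMod.natCast_zmod_surjective j
  rw [alternatingProd_natCast h01]
  induction k with
  | zero => simp [CoxeterSystem.alternatingWord]
  | succ k ih =>
    rw [CoxeterSystem.alternatingWord_succ', cs.wordProd_cons, mul_smul, ih, hact]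
    by_cases hk : Even k <;> simp [hk, τ0, τ1, ZMod.natCast_eq_zero_iff_even]

lemma transversal_smul_inl_zero (h01 : M 0 1 = m) (x : Cell m) :
    transversal cs x • (.inl 0 : Cell m) = x := by
  rcases x with j | j | j
  · exact alternatingProd_smul_inl_zero hact h01 j
  · simp [transversal, mul_smul, alternatingProd_smul_inl_zero hact h01, hact, τ2]
  · rcases par_cases j with h | h <;>
      simp [transversal, h, mul_smul, alternatingProd_smul_inl_zero hact h01, hact, τ0, τ1, τ2,
        CharTwo.add_self_eq_zero]

lemma transversal_simple_smul (h01 : M 0 1 = m) (x : Cell m) (i : Fin 3)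
    (hx : cs.simple i • x ≠ x) :
    transversal cs (cs.simple i • x) = cs.simple i * transversal cs x := by
  rw [hact] at hx ⊢
  rcases x with j | j | j <;> fin_cases i <;> rcases par_cases j with h | h <;>
    simp [transversal, τ0, τ1, τ2, h, alternatingProd_add_one h01, alternatingProd_sub_one h01,
      cs.simple_mul_simple_cancel_left, mul_assoc] at hx ⊢

end Coxeter

end CellAction

open CellAction

theorem statement3_general {M : CoxeterMatrix (Fin 3)} {W : Type*} [Group W]
    (cs : CoxeterSystem M W)
    (k₁₂ k₁₃ k₂₃ : ℕ) (hk₁₂ : 0 < k₁₂)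
    (h12 : M 0 1 = 3 * k₁₂) (h13 : M 0 2 = 5 * k₁₃) (h23 : M 1 2 = 5 * k₂₃) :
    ∃ T : Set W, (∀ t ∈ T, cs.IsReflection t) ∧
      (Subgroup.closure T).index = 18 * k₁₂ ∧ Subgroup.closure T ≠ ⊤ := by
  have : NeZero (3 * k₁₂) := ⟨by omega⟩
  have hσ : M.IsLiftable (σ (m := 3 * k₁₂)) :=
    isLiftable_σ h12 (dvd_mul_right 3 k₁₂) (h13 ▸ dvd_mul_right 5 k₁₃) (h23 ▸ dvd_mul_right 5 k₂₃)
  let _ : MulAction W (Cell (3 * k₁₂)) := MulAction.compHom _ (cs.lift ⟨σ, hσ⟩)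
  have hact (i : Fin 3) (x : Cell (3 * k₁₂)) : cs.simple i • x = σ i x := by
    change cs.lift ⟨σ, hσ⟩ (cs.simple i) x = σ i x
    rw [cs.lift_apply_simple]
  have hindex := cs.index_closure_isReflection (transversal cs) (transversal_smul_inl_zero hact h12)
    transversal_inl_zero (transversal_simple_smul hact h12)
  simp only [Nat.card_sum, Nat.card_zmod] at hindex
  refine ⟨{t | cs.IsReflection t ∧ t • (.inl 0 : Cell (3 * k₁₂)) = .inl 0}, fun t ht => ht.1,
    by rw [hindex]; ring, fun htop => ?_⟩
  rw [htop, Subgroup.index_top] at hindex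
  omega

/-- Let `k₁₂ > 0` and let `k₁₃, k₂₃ > 0` be divisible by neither 2 nor 3.
Then the rank-3 Coxeter group with `m₁₂ = 3k₁₂`, `m₁₃ = 5k₁₃`, `m₂₃ = 5k₂₃` contains a subgroup
of index `18·k₁₂` generated by reflections; in particular it has a proper finite-index
reflection subgroup. -/
theorem statement3 {M : CoxeterMatrix (Fin 3)} {W : Type*} [Group W]
    (cs : CoxeterSystem M W)
    (k₁₂ k₁₃ k₂₃ : ℕ) (hk₁₂ : 0 < k₁₂) (hk₁₃ : 0 < k₁₃) (hk₂₃ : 0 < k₂₃)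
    (hk₁₃2 : ¬ (2 ∣ k₁₃)) (hk₁₃3 : ¬ (3 ∣ k₁₃))
    (hk₂₃2 : ¬ (2 ∣ k₂₃)) (hk₂₃3 : ¬ (3 ∣ k₂₃))
    (h12 : M 0 1 = 3 * k₁₂) (h13 : M 0 2 = 5 * k₁₃) (h23 : M 1 2 = 5 * k₂₃) :
    ∃ T : Set W, (∀ t ∈ T, cs.IsReflection t) ∧
      (Subgroup.closure T).index = 18 * k₁₂ ∧ Subgroup.closure T ≠ ⊤ :=
  statement3_general cs k₁₂ k₁₃ k₂₃ hk₁₂ h12 h13 h23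
end

section
/- Let (W,S) be a Coxeter system and let s_i, s_j, s_k be three distinct generators in S such that the orders m_{ij}, m_{ik}, m_{kj} of the products s_is_j, s_is_k, s_ks_j are each odd or infinite. Then s_i and s_j s_k s_j generate an infinite dihedral group; equivalently, the element s_i · (s_j s_k s_j) has infinite order in W. -/
/-!
Use Tits' geometric representation of `W` on `ℝ^(B)`, in which `s_a` acts as the reflection
`v ↦ v - 2 B(e_a, v) e_a` for the form `B(e_a, e_b) = -cos (π / m_ab)`. Then `s_j s_k s_j` acts as
the reflection in the root `β = s_j e_k`, and since `m_ij`, `m_ik`, `m_kj` are odd or infinite,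
all three of `B(e_i, e_j)`, `B(e_i, e_k)`, `B(e_j, e_k)` are at most `-1/2`, so
`B(e_i, β) = B(e_i, e_k) - 2 B(e_i, e_j) B(e_j, e_k) ≤ -1`. For two reflections whose roots pair
to at most `-1`, the coefficients of the powers of their product are values of Chebyshev
polynomials at a point `t ≥ 2`, which grow without bound; so the product has infinite order.
-/

open Real

namespace Polynomial.Chebyshev

variable {R : Type*} [CommRing R] [LinearOrder R] [IsStrictOrderedRing R]

lemma natCast_add_one_le_S_eval {t : R} (ht : 2 ≤ t) (n : ℕ) :
    (n + 1 : R) ≤ (S R n).eval t := by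
  suffices ∀ n : ℕ, (n + 1 : R) ≤ (S R n).eval t ∧ (S R n).eval t + 1 ≤ (S R (n + 1)).eval t from
    (this n).1
  intro n
  induction n with
  | zero =>
    simp only [Nat.cast_zero, zero_add, S_zero, S_one, eval_one, eval_X]
    constructor <;> linarith
  | succ n ih =>
    have hrec : (S R ((n : ℤ) + 1 + 1)).eval t = t * (S R (n + 1)).eval t - (S R n).eval t := by
      rw [add_assoc, one_add_one_eq_two, S_add_two, eval_sub, eval_mul, eval_X]
    push_cast at ih ⊢
    refine ⟨by linarith, ?_⟩
    rw [hrec]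
    nlinarith

lemma S_eval_two_mul_cos_two_pi_div_even {k : ℕ} (hk : 2 ≤ k) :
    (S ℝ (k - 1)).eval (2 * cos (2 * π / ↑(2 * k))) = 0 := by
  have hk' : (2 : ℝ) ≤ k := by exact_mod_cast hk
  have hsin : sin (2 * π / ↑(2 * k)) ≠ 0 := by
    apply (sin_pos_of_pos_of_lt_pi (by positivity) _).ne'
    push_cast
    rw [div_lt_iff₀ (by positivity)]
    nlinarith [pi_pos]
  have := S_two_mul_real_cos (2 * π / ↑(2 * k)) (k - 1)
  push_cast at this hsin ⊢
  rw [sub_add_cancel, show (k : ℝ) * (2 * π / (2 * k)) = π by field_simp, sin_pi] at this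
  exact (mul_eq_zero.mp this).resolve_right hsin

lemma S_eval_add_S_eval_two_mul_cos_two_pi_div_odd {k : ℕ} (hk : 1 ≤ k) :
    (S ℝ k).eval (2 * cos (2 * π / ↑(2 * k + 1))) +
      (S ℝ (k - 1)).eval (2 * cos (2 * π / ↑(2 * k + 1))) = 0 := by
  set φ := π / ↑(2 * k + 1) with hφ
  have hk' : (1 : ℝ) ≤ k := by exact_mod_cast hk
  have hθ : 2 * π / ↑(2 * k + 1) = 2 * φ := by rw [hφ]; ring
  have hsin : sin (2 * φ) ≠ 0 := by
    apply (sin_pos_of_pos_of_lt_pi (by positivity) _).ne'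
    rw [hφ]; push_cast
    rw [mul_div_assoc', div_lt_iff₀ (by positivity)]
    nlinarith [pi_pos]
  have hmφ : (2 * k + 1 : ℝ) * φ = π := by rw [hφ]; push_cast; field_simp
  have h1 := S_two_mul_real_cos (2 * φ) k
  have h2 := S_two_mul_real_cos (2 * φ) (k - 1)
  push_cast at h1 h2
  rw [show (k + 1 : ℝ) * (2 * φ) = φ + π by linarith, sin_add_pi] at h1
  rw [sub_add_cancel, show (k : ℝ) * (2 * φ) = π - φ by linarith, sin_pi_sub] at h2
  rw [hθ]
  have : ((S ℝ k).eval (2 * cos (2 * φ)) + (S ℝ (k - 1)).eval (2 * cos (2 * φ))) *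
      sin (2 * φ) = 0 := by
    linear_combination h1 + h2
  exact (mul_eq_zero.mp this).resolve_right hsin

end Polynomial.Chebyshev

namespace Module

open Polynomial Polynomial.Chebyshev

section CommRing

variable {R M : Type*} [CommRing R] [AddCommGroup M] [Module R M] {x y : M} {f g : Dual R M}

lemma reflection_conj (e : M ≃ₗ[R] M) (hf : f x = 2) :
    e * reflection hf * e⁻¹ =
      reflection (x := e x) (f := f ∘ₗ e.symm.toLinearMap) (by simpa using hf) := by
  ext z
  simp [reflection_apply]

lemma reflection_mul_reflection_sq_eq_one (hf : f x = 2) (hg : g y = 2) (hfy : f y = 0)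
    (hgx : g x = 0) : (reflection hf * reflection hg) ^ 2 = 1 := by
  ext z
  simp [pow_two, reflection_apply, hf, hg, hfy, hgx]
  module

lemma not_isOfFinOrder_reflection_mul_reflection [LinearOrder R] [IsStrictOrderedRing R]
    (hxy : LinearIndependent R ![x, y]) (hf : f x = 2) (hg : g y = 2) (h : 4 ≤ f y * g x) :
    ¬ IsOfFinOrder (reflection hf * reflection hg) := by
  rw [isOfFinOrder_iff_pow_eq_one]
  rintro ⟨n, hn, hpow⟩
  -- The `x`-coefficient of `(r₁ r₂) ^ n x` is `S_n(t) + S_{n-1}(t) ≥ 2n + 1`, with `t ≥ 2`.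
  have hx := reflection_mul_reflection_pow_apply_self hf hg n
  rw [hpow, LinearEquiv.coe_one, id] at hx
  have h1 := (hxy.eq_of_pair <| hx.symm.trans (by simp : x = (1 : R) • x + (0 : R) • y)).1
  obtain ⟨n, rfl⟩ : ∃ m, n = m + 1 := ⟨n - 1, by omega⟩
  have ht : 2 ≤ f y * g x - 2 := by linarith
  have hS := natCast_add_one_le_S_eval ht (n + 1)
  have hS' := natCast_add_one_le_S_eval ht n
  push_cast at h1 hS
  rw [add_sub_cancel_right] at h1
  linarith

end CommRing

section Real

variable {M : Type*} [AddCommGroup M] [Module ℝ M] {x y : M} {f g : Dual ℝ M}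

lemma reflection_mul_reflection_pow_eq_one {m : ℕ} (hm : 3 ≤ m) (hf : f x = 2) (hg : g y = 2)
    (h : f y * g x = 4 * cos (π / m) ^ 2) : (reflection hf * reflection hg) ^ m = 1 := by
  have ht : 2 * cos (2 * π / m) = f y * g x - 2 := by
    rw [h, mul_div_assoc, cos_two_mul]; ring
  apply LinearEquiv.toLinearMap_injective
  -- Both coefficients in the formula for `(r₁ r₂) ^ m` contain the factor `S_{k-1}(t)` if
  -- `m = 2k`, resp. `S_k(t) + S_{k-1}(t)` if `m = 2k + 1`, which vanishes at `t = 2 cos (2π / m)`.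
  rw [reflection_mul_reflection_pow hf hg m _ ht]
  obtain ⟨k, rfl | rfl⟩ := Nat.even_or_odd' m
  · have h0 := S_eval_two_mul_cos_two_pi_div_even (k := k) (by omega)
    push_cast at h0 ⊢
    rw [show ((2 * k - 2 : ℤ) / 2) = k - 1 by omega, show ((2 * k - 1 : ℤ) / 2) = k - 1 by omega]
    simp [h0]
  · have h0 := S_eval_add_S_eval_two_mul_cos_two_pi_div_odd (k := k) (by omega)
    push_cast at h0 ⊢
    rw [show ((2 * k + 1 - 1 : ℤ) / 2) = k by omega, show ((2 * k + 1 : ℤ) / 2) = k by omega,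
      show ((2 * k + 1 - 3 : ℤ) / 2) = k - 1 by omega,
      show ((2 * k + 1 - 2 : ℤ) / 2) = k - 1 by omega]
    simp [h0]

end Real

end Module

namespace CoxeterMatrix

open Finsupp Module

variable {B : Type*} (M : CoxeterMatrix B)

-- `M a b = 0` encodes `m_ab = ∞`, and then the convention `π / 0 = 0` gives the right value `-1`.
noncomputable def titsForm (a b : B) : ℝ := -cos (π / M a b)

lemma titsForm_symm (a b : B) : M.titsForm a b = M.titsForm b a := by
  rw [titsForm, M.symmetric, titsForm]

lemma titsForm_self (a : B) : M.titsForm a a = 1 := by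
  simp [titsForm]

lemma titsForm_le_neg_half {a b : B} (hab : a ≠ b) (h : M a b = 0 ∨ Odd (M a b)) :
    M.titsForm a b ≤ -1 / 2 := by
  have hM : M a b = 0 ∨ 3 ≤ M a b := by
    have := M.off_diagonal a b hab
    rcases h with h | ⟨r, hr⟩ <;> omega
  have hle : π / M a b ≤ π / 3 := by
    rcases hM with h0 | h3
    · simp only [h0, CharP.cast_eq_zero, div_zero]; positivity
    · exact div_le_div_of_nonneg_left pi_pos.le (by norm_num) (by exact_mod_cast h3)
  have := cos_le_cos_of_nonneg_of_le_pi (by positivity) (by linarith [pi_pos]) hle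
  rw [cos_pi_div_three] at this
  rw [titsForm]
  linarith

noncomputable def titsCoroot (a : B) : Dual ℝ (B →₀ ℝ) :=
  linearCombination ℝ fun b => 2 * M.titsForm a b

lemma titsCoroot_single (a b : B) : M.titsCoroot a (single b 1) = 2 * M.titsForm a b := by
  simp [titsCoroot]

lemma titsCoroot_single_self (a : B) : M.titsCoroot a (single a 1) = 2 := by
  simp [titsCoroot_single, titsForm_self]

noncomputable def titsReflection (a : B) : (B →₀ ℝ) ≃ₗ[ℝ] (B →₀ ℝ) :=
  reflection (M.titsCoroot_single_self a)

lemma titsReflection_single (a b : B) :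
    M.titsReflection a (single b 1) = single b 1 - (2 * M.titsForm a b) • single a 1 := by
  rw [titsReflection, reflection_apply, titsCoroot_single]

lemma isLiftable_titsReflection : M.IsLiftable M.titsReflection := by
  intro a b
  obtain rfl | hab := eq_or_ne a b
  · rw [M.diagonal, pow_one]
    exact mul_eq_one_iff_eq_inv.mpr (reflection_inv _).symm
  obtain h0 | h2 | h3 : M a b = 0 ∨ M a b = 2 ∨ 3 ≤ M a b := by
    have := M.off_diagonal a b hab
    omega
  · rw [h0, pow_zero]
  · rw [h2]
    apply reflection_mul_reflection_sq_eq_one <;>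
      simp [titsCoroot_single, titsForm, h2, M.symmetric b a]
  · apply reflection_mul_reflection_pow_eq_one h3
    simp [titsCoroot_single, titsForm, M.symmetric b a]
    ring

theorem not_isOfFinOrder_titsReflection_mul_conj {i j k : B} (hij : i ≠ j) (hik : i ≠ k)
    (hjk : j ≠ k) (h_ij : M.titsForm i j ≤ -1 / 2) (h_ik : M.titsForm i k ≤ -1 / 2)
    (h_jk : M.titsForm j k ≤ -1 / 2) :
    ¬ IsOfFinOrder (M.titsReflection i *
      (M.titsReflection j * M.titsReflection k * M.titsReflection j)) := by
  rw [show M.titsReflection j * M.titsReflection k * M.titsReflection j =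
    M.titsReflection j * reflection (M.titsCoroot_single_self k) * (M.titsReflection j)⁻¹ from rfl,
    reflection_conj]
  apply not_isOfFinOrder_reflection_mul_reflection
  · rw [titsReflection_single, LinearIndependent.pair_iff]
    intro s t hst
    have hi := congrArg (· i) hst
    have hk := congrArg (· k) hst
    simp [hij, hik, hik.symm, hjk.symm] at hi hk
    exact ⟨hi, hk⟩
  · rw [titsReflection, reflection_symm, ← titsReflection]
    simp only [LinearMap.comp_apply, LinearEquiv.coe_coe, titsReflection_single, map_sub, map_smul,
      titsCoroot_single, smul_eq_mul]
    rw [M.titsForm_symm k i, M.titsForm_symm k j, M.titsForm_symm j i]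
    have : M.titsForm i k - 2 * M.titsForm i j * M.titsForm j k ≤ -1 := by nlinarith
    nlinarith

end CoxeterMatrix

/-- Let `(W,S)` be a Coxeter system and `s_i, s_j, s_k` three distinct
generators such that the orders `m i j`, `m i k`, `m k j` are each odd or infinite (`0` encodes
`∞`).  Then `s_i` and `s_j s_k s_j` generate an infinite dihedral group; equivalently, the
element `s_i * (s_j * s_k * s_j)` has infinite order in `W`. -/
theorem statement6 {B : Type*} {M : CoxeterMatrix B} {W : Type*} [Group W]
    (cs : CoxeterSystem M W)
    (i j k : B) (hij : i ≠ j) (hik : i ≠ k) (hjk : j ≠ k)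
    (hmij : M i j = 0 ∨ Odd (M i j))
    (hmik : M i k = 0 ∨ Odd (M i k))
    (hmkj : M k j = 0 ∨ Odd (M k j)) :
    ¬ IsOfFinOrder (cs.simple i * (cs.simple j * cs.simple k * cs.simple j)) := by
  intro hfin
  let ρ := cs.lift ⟨M.titsReflection, M.isLiftable_titsReflection⟩
  have hρ (a : B) : ρ (cs.simple a) = M.titsReflection a :=
    cs.lift_apply_simple M.isLiftable_titsReflection a
  have hjk' : M.titsForm j k ≤ -1 / 2 := by
    rw [M.titsForm_symm]
    exact M.titsForm_le_neg_half hjk.symm hmkj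
  refine M.not_isOfFinOrder_titsReflection_mul_conj hij hik hjk
    (M.titsForm_le_neg_half hij hmij) (M.titsForm_le_neg_half hik hmik) hjk' ?_
  simpa only [map_mul, hρ] using ρ.isOfFinOrder hfin
end
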